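/- arXiv:2605.09930 — 9 statements merged into one kernel-verified Lean document; each statement's English description precedes it below -/
import Mathlib

section
/- Consider two agents and six items o_1,...,o_6 whose conflict graph is the 6-cycle with edges {o_1,o_2}, {o_2,o_3}, {o_3,o_4}, {o_4,o_5}, {o_5,o_6}, {o_6,o_1}, and where both agents have the same additive valuation v with v(o_1) = v(o_3) = v(o_5) = 1 and v(o_2) = v(o_4) = v(o_6) = 2. Then no allocation (A_1, A_2) is both EF1 and Pareto optimal. -/
/-!
The independent sets of the 6-cycle of value at least 4 contain two of the heavy items
`o_2, o_4, o_6`, so in every allocation some agent `i` gets value at most 3. Giving `i` the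
light items `{o_1, o_3, o_5}` (value 3) and the other agent `j` the heavy ones (value 6, the
maximum over independent sets) weakly improves both agents, so Pareto optimality forces
`v(A_j) = 6`. Then even after removing one item (worth at most 2) from `A_j`, agent `i`
still envies `j`, so EF1 fails.
-/

/-- 6-cycle adjacency on items o_1,...,o_6 (indexed 0,...,5). -/
def cAdj2 (i j : Fin 6) : Prop := (i.val + 1) % 6 = j.val ∨ (j.val + 1) % 6 = i.val

/-- The identical additive valuation with values 1, 2, 1, 2, 1, 2. -/
noncomputable def v2 (S : Finset (Fin 6)) : ℝ := ∑ o ∈ S, (![1, 2, 1, 2, 1, 2] : Fin 6 → ℝ) o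

/-- Feasible allocation for two agents: disjoint bundles, each independent in the cycle. -/
def isAlloc2 (A : Fin 2 → Finset (Fin 6)) : Prop :=
  (∀ i j : Fin 2, i ≠ j → Disjoint (A i) (A j)) ∧
  (∀ i : Fin 2, ∀ x ∈ A i, ∀ y ∈ A i, ¬ cAdj2 x y)

instance (i j : Fin 6) : Decidable (cAdj2 i j) := by unfold cAdj2; infer_instance

def IsIndep (S : Finset (Fin 6)) : Prop := ∀ x ∈ S, ∀ y ∈ S, ¬ cAdj2 x y

instance : DecidablePred IsIndep := fun S => by unfold IsIndep; infer_instance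

/-- The valuation `v2` with natural-number values, so that statements about it can be decided. -/
def weight (S : Finset (Fin 6)) : ℕ := ∑ o ∈ S, (![1, 2, 1, 2, 1, 2] : Fin 6 → ℕ) o

lemma v2_eq_weight (S : Finset (Fin 6)) : v2 S = weight S := by
  unfold v2 weight
  push_cast
  refine Finset.sum_congr rfl fun o _ => ?_
  fin_cases o <;> norm_num

lemma v2_nonneg_item (o : Fin 6) : 0 ≤ (![1, 2, 1, 2, 1, 2] : Fin 6 → ℝ) o := by
  fin_cases o <;> norm_num

lemma v2_item_le_two (o : Fin 6) : (![1, 2, 1, 2, 1, 2] : Fin 6 → ℝ) o ≤ 2 := by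
  fin_cases o <;> norm_num

lemma v2_mono {S T : Finset (Fin 6)} (h : S ⊆ T) : v2 S ≤ v2 T :=
  Finset.sum_le_sum_of_subset_of_nonneg h fun o _ _ => v2_nonneg_item o

lemma v2_le_v2_sdiff_add_two (T : Finset (Fin 6)) {U : Finset (Fin 6)} (hU : U.card ≤ 1) :
    v2 T ≤ v2 (T \ U) + 2 := by
  have hsplit : v2 (T ∩ U) + v2 (T \ U) = v2 T := Finset.sum_inter_add_sum_sdiff T U _
  have hinter : v2 (T ∩ U) ≤ (T ∩ U).card • (2 : ℝ) :=
    Finset.sum_le_card_nsmul _ _ _ fun o _ => v2_item_le_two o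
  have hcard : ((T ∩ U).card : ℝ) ≤ 1 := by
    exact_mod_cast (Finset.card_le_card Finset.inter_subset_right).trans hU
  rw [nsmul_eq_mul] at hinter
  linarith

set_option maxRecDepth 10000 in
lemma v2_le_six_of_isIndep {S : Finset (Fin 6)} (hS : IsIndep S) : v2 S ≤ 6 := by
  have key : ∀ S : Finset (Fin 6), IsIndep S → weight S ≤ 6 := by decide
  rw [v2_eq_weight]
  exact_mod_cast key S hS

set_option maxRecDepth 40000 in
lemma exists_v2_le_three {A : Fin 2 → Finset (Fin 6)} (hA : isAlloc2 A) :
    ∃ i, v2 (A i) ≤ 3 := by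
  have key : ∀ S T : Finset (Fin 6), IsIndep S → IsIndep T → Disjoint S T →
      weight S ≤ 3 ∨ weight T ≤ 3 := by decide
  simp only [v2_eq_weight]
  rcases key (A 0) (A 1) (hA.2 0) (hA.2 1) (hA.1 0 1 (by decide)) with h | h
  · exact ⟨0, by exact_mod_cast h⟩
  · exact ⟨1, by exact_mod_cast h⟩

lemma v2_light : v2 {0, 2, 4} = 3 := by
  rw [v2_eq_weight]
  exact_mod_cast (by decide : weight {0, 2, 4} = 3)

lemma v2_heavy : v2 {1, 3, 5} = 6 := by
  rw [v2_eq_weight]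
  exact_mod_cast (by decide : weight {1, 3, 5} = 6)

def parityAlloc (i : Fin 2) : Fin 2 → Finset (Fin 6) :=
  fun k => if k = i then {0, 2, 4} else {1, 3, 5}

lemma isAlloc2_parityAlloc (i : Fin 2) : isAlloc2 (parityAlloc i) := by
  revert i
  unfold isAlloc2 parityAlloc
  decide

lemma v2_le_v2_parityAlloc {A : Fin 2 → Finset (Fin 6)} (hA : isAlloc2 A) {i : Fin 2}
    (hi : v2 (A i) ≤ 3) (k : Fin 2) : v2 (A k) ≤ v2 (parityAlloc i k) := by
  by_cases hk : k = i
  · simpa [parityAlloc, hk, v2_light] using hi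
  · simpa [parityAlloc, hk, v2_heavy] using v2_le_six_of_isIndep (hA.2 k)

/-- no allocation is both EF1 and Pareto optimal. -/
theorem stmt_2 :
    ¬ ∃ A : Fin 2 → Finset (Fin 6),
      isAlloc2 A ∧
      (∀ i j : Fin 2, ∃ S : Finset (Fin 6), S ⊆ A i ∪ A j ∧ S.card ≤ 1 ∧
        v2 (A i \ S) ≥ v2 (A j \ S)) ∧
      (¬ ∃ A' : Fin 2 → Finset (Fin 6), isAlloc2 A' ∧
        (∀ i : Fin 2, v2 (A' i) ≥ v2 (A i)) ∧ (∃ i : Fin 2, v2 (A' i) > v2 (A i))) := by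
  rintro ⟨A, hA, hEF1, hPO⟩
  obtain ⟨i, hi⟩ := exists_v2_le_three hA
  obtain ⟨j, hji⟩ := exists_ne i
  have hdom := v2_le_v2_parityAlloc hA hi
  have hj : 6 ≤ v2 (A j) := by
    by_contra! hlt
    have h6 : v2 (parityAlloc i j) = 6 := by simp [parityAlloc, hji, v2_heavy]
    exact hPO ⟨parityAlloc i, isAlloc2_parityAlloc i, hdom, j, by linarith⟩
  obtain ⟨S, -, hS, hEF⟩ := hEF1 i j
  linarith [v2_mono (Finset.sdiff_subset : A i \ S ⊆ A i), v2_le_v2_sdiff_add_two (A j) hS]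
end

section
/- Consider two agents and four items o_1, o_2, o_3, o_4 whose conflict graph is the path with edges {o_1,o_2}, {o_2,o_3}, {o_3,o_4}, and where both agents have the same additive valuation v with v(o_1) = v(o_3) = 1 and v(o_2) = v(o_4) = 3. Then no allocation (A_1, A_2) is both complete and EF1. -/
/-!
Adjacent items must go to different agents, and with two agents every item goes to one of them,
so a complete allocation with independent bundles 2-colours the path: one agent receives
`{o₁, o₃}` (value 2) and the other `{o₂, o₄}` (value 6). Removing a single item leaves the second
bundle worth at least 3, so the first agent still envies.
-/

/-- Path graph adjacency on four items o_1,...,o_4 (indexed 0,...,3). -/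
def pAdj4 (i j : Fin 4) : Prop := i.val + 1 = j.val ∨ j.val + 1 = i.val

/-- The identical additive valuation with values 1, 3, 1, 3. -/
noncomputable def v4 (S : Finset (Fin 4)) : ℝ := ∑ o ∈ S, (![1, 3, 1, 3] : Fin 4 → ℝ) o

section TwoColouring

variable {α : Type*} {r : α → α → Prop} {A B : Finset α}

lemma mem_iff_notMem_of_adj (hcover : ∀ o, o ∈ A ∨ o ∈ B)
    (hA : ∀ x ∈ A, ∀ y ∈ A, ¬ r x y) (hB : ∀ x ∈ B, ∀ y ∈ B, ¬ r x y) {x y : α} (hxy : r x y) :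
    x ∈ A ↔ y ∉ A := by
  refine ⟨fun hx hy => hA x hx y hy hxy, fun hy => ?_⟩
  have hyB := (hcover y).resolve_left hy
  exact (hcover x).resolve_right fun hxB => hB x hxB y hyB hxy

lemma eq_compl_of_disjoint_of_cover [Fintype α] [DecidableEq α] (hAB : Disjoint A B)
    (hcover : ∀ o, o ∈ A ∨ o ∈ B) : B = Aᶜ := by
  ext o
  rw [Finset.mem_compl]
  exact ⟨fun hoB => Finset.disjoint_right.mp hAB hoB, (hcover o).resolve_left⟩

end TwoColouring

lemma eq_evens_of_zero_mem {A B : Finset (Fin 4)} (hcover : ∀ o, o ∈ A ∨ o ∈ B)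
    (hA : ∀ x ∈ A, ∀ y ∈ A, ¬ pAdj4 x y) (hB : ∀ x ∈ B, ∀ y ∈ B, ¬ pAdj4 x y) (h0 : 0 ∈ A) :
    A = {0, 2} := by
  have step (x y : Fin 4) (hxy : pAdj4 x y) := mem_iff_notMem_of_adj hcover hA hB hxy
  have h1 : 1 ∉ A := (step 0 1 (Or.inl rfl)).mp h0
  have h2 : 2 ∈ A := (step 2 1 (Or.inr rfl)).mpr h1
  have h3 : 3 ∉ A := (step 2 3 (Or.inl rfl)).mp h2
  ext o
  fin_cases o <;> simp [h0, h1, h2, h3]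

lemma v4_mono {S T : Finset (Fin 4)} (h : S ⊆ T) : v4 S ≤ v4 T :=
  Finset.sum_le_sum_of_subset_of_nonneg h fun o _ _ => by fin_cases o <;> norm_num

lemma three_le_v4_odds_sdiff {S : Finset (Fin 4)} (hS : S.card ≤ 1) : 3 ≤ v4 ({1, 3} \ S) := by
  have hsingle (o : Fin 4) (ho : o ∈ ({1, 3} : Finset (Fin 4)) \ S)
      (hval : (![1, 3, 1, 3] : Fin 4 → ℝ) o = 3) : 3 ≤ v4 ({1, 3} \ S) :=
    hval ▸ Finset.single_le_sum (fun o _ => by fin_cases o <;> norm_num) ho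
  by_cases h1 : 1 ∈ S
  · have h3 : 3 ∉ S := fun h3 => by
      have hpair :=
        Finset.card_le_card (Finset.insert_subset h1 (Finset.singleton_subset_iff.mpr h3))
      rw [Finset.card_pair (by decide)] at hpair
      omega
    exact hsingle 3 (by simp [h3]) rfl
  · exact hsingle 1 (by simp [h1]) rfl

lemma v4_evens_sdiff_lt_v4_odds_sdiff {S : Finset (Fin 4)} (hS : S.card ≤ 1) :
    v4 ({0, 2} \ S) < v4 ({1, 3} \ S) :=
  calc v4 ({0, 2} \ S) ≤ v4 {0, 2} := v4_mono Finset.sdiff_subset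
    _ = 2 := by rw [v4, Finset.sum_pair (by decide)]; norm_num [Matrix.cons_val_two]
    _ < 3 := by norm_num
    _ ≤ v4 ({1, 3} \ S) := three_le_v4_odds_sdiff hS

lemma envy_of_zero_mem {A B : Finset (Fin 4)} (hAB : Disjoint A B) (hcover : ∀ o, o ∈ A ∨ o ∈ B)
    (hA : ∀ x ∈ A, ∀ y ∈ A, ¬ pAdj4 x y) (hB : ∀ x ∈ B, ∀ y ∈ B, ¬ pAdj4 x y) (h0 : 0 ∈ A)
    {S : Finset (Fin 4)} (hS : S.card ≤ 1) : v4 (A \ S) < v4 (B \ S) := by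
  have hA_eq := eq_evens_of_zero_mem hcover hA hB h0
  have hB_eq : B = {1, 3} := by rw [eq_compl_of_disjoint_of_cover hAB hcover, hA_eq]; decide
  rw [hA_eq, hB_eq]
  exact v4_evens_sdiff_lt_v4_odds_sdiff hS

/-- no allocation is both complete and EF1. -/
theorem stmt_4 :
    ¬ ∃ A : Fin 2 → Finset (Fin 4),
      (∀ i j : Fin 2, i ≠ j → Disjoint (A i) (A j)) ∧
      (∀ i : Fin 2, ∀ x ∈ A i, ∀ y ∈ A i, ¬ pAdj4 x y) ∧
      (∀ o : Fin 4, ∃ i : Fin 2, o ∈ A i) ∧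
      (∀ i j : Fin 2, ∃ S : Finset (Fin 4), S ⊆ A i ∪ A j ∧ S.card ≤ 1 ∧
        v4 (A i \ S) ≥ v4 (A j \ S)) := by
  rintro ⟨A, hdisj, hindep, hcomplete, hef1⟩
  have hcover (o : Fin 4) : o ∈ A 0 ∨ o ∈ A 1 := by
    obtain ⟨i, hi⟩ := hcomplete o
    fin_cases i <;> simp_all
  rcases hcover 0 with h0 | h0
  · obtain ⟨S, -, hS, hle⟩ := hef1 0 1
    exact (envy_of_zero_mem (hdisj 0 1 (by decide)) hcover (hindep 0) (hindep 1) h0 hS).not_ge hle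
  · obtain ⟨S, -, hS, hle⟩ := hef1 1 0
    exact (envy_of_zero_mem (hdisj 1 0 (by decide)) (fun o => (hcover o).symm) (hindep 1) (hindep 0)
      h0 hS).not_ge hle
end

section
/- Let G be any finite conflict graph, and let v and v' be any (not necessarily monotone) valuations on sets of items. If (A_1, A_2) is an allocation for two agents that is maximal and EF1 when both agents have valuation v, then either (A_1, A_2) or the reversed allocation (A_2, A_1) is maximal and EF1 when the first agent has valuation v and the second agent has valuation v'. -/
/-! Cut and choose: with a single valuation, of any two bundles one is weakly preferred, so the
agent holding it is envy-free, in particular EF1, towards the other. If the second agent (valuation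
`v'`) is EF1 towards `A₁` we keep the allocation; otherwise she prefers `A₁`, and after swapping
she is envy-free, while the first agent (valuation `v`) stays EF1 because `(A₁, A₂)` was EF1 for
`v` in both directions. Maximality does not depend on the order of the agents. -/

theorem exists_ef1_or_exists_ef1_swap {α : Type*} [DecidableEq α] (u : Finset α → ℝ)
    (A B : Finset α) :
    (∃ S ⊆ A ∪ B, S.card ≤ 1 ∧ u (A \ S) ≥ u (B \ S)) ∨
      (∃ S ⊆ B ∪ A, S.card ≤ 1 ∧ u (B \ S) ≥ u (A \ S)) := by
  rcases le_total (u B) (u A) with hBA | hAB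
  · exact Or.inl ⟨∅, Finset.empty_subset _, by simp, by simpa using hBA⟩
  · exact Or.inr ⟨∅, Finset.empty_subset _, by simp, by simpa using hAB⟩

theorem stmt_7_general {α : Type*} [DecidableEq α] (G : SimpleGraph α)
    (v v' : Finset α → ℝ)
    (A₁ A₂ : Finset α)
    (hmax : ∀ o : α, o ∉ A₁ → o ∉ A₂ → (∃ x ∈ A₁, G.Adj o x) ∧ (∃ x ∈ A₂, G.Adj o x))
    (hEF1 : (∃ S ⊆ A₁ ∪ A₂, S.card ≤ 1 ∧ v (A₁ \ S) ≥ v (A₂ \ S)) ∧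
            (∃ S ⊆ A₂ ∪ A₁, S.card ≤ 1 ∧ v (A₂ \ S) ≥ v (A₁ \ S))) :
    ((∀ o : α, o ∉ A₁ → o ∉ A₂ → (∃ x ∈ A₁, G.Adj o x) ∧ (∃ x ∈ A₂, G.Adj o x)) ∧
      (∃ S ⊆ A₁ ∪ A₂, S.card ≤ 1 ∧ v (A₁ \ S) ≥ v (A₂ \ S)) ∧
      (∃ S ⊆ A₂ ∪ A₁, S.card ≤ 1 ∧ v' (A₂ \ S) ≥ v' (A₁ \ S))) ∨
    ((∀ o : α, o ∉ A₂ → o ∉ A₁ → (∃ x ∈ A₂, G.Adj o x) ∧ (∃ x ∈ A₁, G.Adj o x)) ∧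
      (∃ S ⊆ A₂ ∪ A₁, S.card ≤ 1 ∧ v (A₂ \ S) ≥ v (A₁ \ S)) ∧
      (∃ S ⊆ A₁ ∪ A₂, S.card ≤ 1 ∧ v' (A₁ \ S) ≥ v' (A₂ \ S))) := by
  have hmax_swap : ∀ o : α, o ∉ A₂ → o ∉ A₁ →
      (∃ x ∈ A₂, G.Adj o x) ∧ (∃ x ∈ A₁, G.Adj o x) :=
    fun o h₂ h₁ => (hmax o h₁ h₂).symm
  rcases exists_ef1_or_exists_ef1_swap v' A₂ A₁ with hkeep | hswap
  · exact Or.inl ⟨hmax, hEF1.1, hkeep⟩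
  · exact Or.inr ⟨hmax_swap, hEF1.2, hswap⟩

/-- cut-and-choose style lemma: if (A₁, A₂) is maximal and EF1 when both
agents have valuation v, then either (A₁, A₂) or (A₂, A₁) is maximal and EF1 when the
first agent has valuation v and the second has valuation v'. -/
theorem stmt_7 {α : Type*} [Fintype α] [DecidableEq α] (G : SimpleGraph α)
    (v v' : Finset α → ℝ) (hv : v ∅ = 0) (hv' : v' ∅ = 0)
    (A₁ A₂ : Finset α)
    (hdisj : Disjoint A₁ A₂)
    (hind1 : ∀ x ∈ A₁, ∀ y ∈ A₁, ¬ G.Adj x y)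
    (hind2 : ∀ x ∈ A₂, ∀ y ∈ A₂, ¬ G.Adj x y)
    (hmax : ∀ o : α, o ∉ A₁ → o ∉ A₂ → (∃ x ∈ A₁, G.Adj o x) ∧ (∃ x ∈ A₂, G.Adj o x))
    (hEF1 : (∃ S ⊆ A₁ ∪ A₂, S.card ≤ 1 ∧ v (A₁ \ S) ≥ v (A₂ \ S)) ∧
            (∃ S ⊆ A₂ ∪ A₁, S.card ≤ 1 ∧ v (A₂ \ S) ≥ v (A₁ \ S))) :
    ((∀ o : α, o ∉ A₁ → o ∉ A₂ → (∃ x ∈ A₁, G.Adj o x) ∧ (∃ x ∈ A₂, G.Adj o x)) ∧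
      (∃ S ⊆ A₁ ∪ A₂, S.card ≤ 1 ∧ v (A₁ \ S) ≥ v (A₂ \ S)) ∧
      (∃ S ⊆ A₂ ∪ A₁, S.card ≤ 1 ∧ v' (A₂ \ S) ≥ v' (A₁ \ S))) ∨
    ((∀ o : α, o ∉ A₂ → o ∉ A₁ → (∃ x ∈ A₂, G.Adj o x) ∧ (∃ x ∈ A₁, G.Adj o x)) ∧
      (∃ S ⊆ A₂ ∪ A₁, S.card ≤ 1 ∧ v (A₂ \ S) ≥ v (A₁ \ S)) ∧
      (∃ S ⊆ A₁ ∪ A₂, S.card ≤ 1 ∧ v' (A₁ \ S) ≥ v' (A₂ \ S))) :=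
  stmt_7_general G v v' A₁ A₂ hmax hEF1
end

section
/- Let v be a monotone non-decreasing valuation (with v(∅) = 0) shared by two agents, and let (A, A') with A = (A_1, A_2) and A' = (A'_1, A'_2) be an order-adjacent pair of allocations, i.e., |A_1 \ A'_1| ≤ 1 and |A'_2 \ A_2| ≤ 1. If v(A_1) ≥ v(A_2) and v(A'_2) ≥ v(A'_1), then at least one of the allocations A and A' is EF1 (with both agents having valuation v). -/
/-!
Split on whether agent 2 stops envying `A` once the (at most one) item of `A₁ \ A₁'` is removed
from `A₁`. If so, `A` is EF1, agent 1 not envying at all. If not, then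
`v A₂ < v (A₁ ∩ A₁') ≤ v A₁'`, while removing the item of `A₂' \ A₂` leaves
`A₂' ∩ A₂ ⊆ A₂`; so agent 1 is EF1 in `A'`, and agent 2 does not envy there.
-/

namespace Finset

variable {α : Type*} [DecidableEq α]

/-- The owner of `X` does not envy the owner of `Y` up to removing at most one item. -/
def EFOne (v : Finset α → ℝ) (X Y : Finset α) : Prop :=
  ∃ S ⊆ X ∪ Y, S.card ≤ 1 ∧ v (X \ S) ≥ v (Y \ S)

variable {v : Finset α → ℝ} {X Y : Finset α}

theorem EFOne.of_le (h : v Y ≤ v X) : EFOne v X Y :=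
  ⟨∅, empty_subset _, by simp, by simpa using h⟩

theorem EFOne.of_disjoint_of_le_sdiff {S : Finset α} (hXY : Disjoint X Y) (hSY : S ⊆ Y)
    (hS : S.card ≤ 1) (h : v (Y \ S) ≤ v X) : EFOne v X Y := by
  refine ⟨S, hSY.trans subset_union_right, hS, ?_⟩
  rwa [sdiff_eq_self_of_disjoint (hXY.mono_right hSY)]

theorem efOne_or_efOne_of_orderAdjacent (hv : Monotone v) {A₁ A₂ A₁' A₂' : Finset α}
    (hA : Disjoint A₁ A₂) (hA' : Disjoint A₁' A₂')
    (hoa₁ : (A₁ \ A₁').card ≤ 1) (hoa₂ : (A₂' \ A₂).card ≤ 1)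
    (h₁ : v A₂ ≤ v A₁) (h₂ : v A₁' ≤ v A₂') :
    (EFOne v A₁ A₂ ∧ EFOne v A₂ A₁) ∨ (EFOne v A₁' A₂' ∧ EFOne v A₂' A₁') := by
  by_cases hkept : v (A₁ ∩ A₁') ≤ v A₂
  · refine .inl ⟨.of_le h₁, .of_disjoint_of_le_sdiff hA.symm sdiff_subset hoa₁ ?_⟩
    rwa [sdiff_sdiff_self_left]
  · refine .inr ⟨.of_disjoint_of_le_sdiff hA' sdiff_subset hoa₂ ?_, .of_le h₂⟩
    rw [sdiff_sdiff_self_left]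
    calc v (A₂' ∩ A₂) ≤ v A₂ := hv inter_subset_right
      _ ≤ v (A₁ ∩ A₁') := (not_le.mp hkept).le
      _ ≤ v A₁' := hv inter_subset_right

end Finset

theorem stmt_8_general {α : Type*} [DecidableEq α]
    (v : Finset α → ℝ)
    (hmono : ∀ S T : Finset α, S ⊆ T → v S ≤ v T)
    (A₁ A₂ A₁' A₂' : Finset α)
    (hA : Disjoint A₁ A₂) (hA' : Disjoint A₁' A₂')
    (hoa1 : (A₁ \ A₁').card ≤ 1) (hoa2 : (A₂' \ A₂).card ≤ 1)
    (h1 : v A₁ ≥ v A₂) (h2 : v A₂' ≥ v A₁') :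
    ((∃ S ⊆ A₁ ∪ A₂, S.card ≤ 1 ∧ v (A₁ \ S) ≥ v (A₂ \ S)) ∧
     (∃ S ⊆ A₂ ∪ A₁, S.card ≤ 1 ∧ v (A₂ \ S) ≥ v (A₁ \ S))) ∨
    ((∃ S ⊆ A₁' ∪ A₂', S.card ≤ 1 ∧ v (A₁' \ S) ≥ v (A₂' \ S)) ∧
     (∃ S ⊆ A₂' ∪ A₁', S.card ≤ 1 ∧ v (A₂' \ S) ≥ v (A₁' \ S))) :=
  Finset.efOne_or_efOne_of_orderAdjacent (fun S T h => hmono S T h) hA hA' hoa1 hoa2 h1 h2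

/-- if (A, A') is an order-adjacent pair of allocations, v(A₁) ≥ v(A₂), and
v(A'₂) ≥ v(A'₁), then at least one of the two allocations is EF1 (both agents sharing the
monotone non-decreasing valuation v). -/
theorem stmt_8 {α : Type*} [Fintype α] [DecidableEq α] (G : SimpleGraph α)
    (v : Finset α → ℝ) (hzero : v ∅ = 0)
    (hmono : ∀ S T : Finset α, S ⊆ T → v S ≤ v T)
    (A₁ A₂ A₁' A₂' : Finset α)
    (hA : Disjoint A₁ A₂) (hA' : Disjoint A₁' A₂')
    (hind1 : ∀ x ∈ A₁, ∀ y ∈ A₁, ¬ G.Adj x y)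
    (hind2 : ∀ x ∈ A₂, ∀ y ∈ A₂, ¬ G.Adj x y)
    (hind1' : ∀ x ∈ A₁', ∀ y ∈ A₁', ¬ G.Adj x y)
    (hind2' : ∀ x ∈ A₂', ∀ y ∈ A₂', ¬ G.Adj x y)
    (hoa1 : (A₁ \ A₁').card ≤ 1) (hoa2 : (A₂' \ A₂).card ≤ 1)
    (h1 : v A₁ ≥ v A₂) (h2 : v A₂' ≥ v A₁') :
    ((∃ S ⊆ A₁ ∪ A₂, S.card ≤ 1 ∧ v (A₁ \ S) ≥ v (A₂ \ S)) ∧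
     (∃ S ⊆ A₂ ∪ A₁, S.card ≤ 1 ∧ v (A₂ \ S) ≥ v (A₁ \ S))) ∨
    ((∃ S ⊆ A₁' ∪ A₂', S.card ≤ 1 ∧ v (A₁' \ S) ≥ v (A₂' \ S)) ∧
     (∃ S ⊆ A₂' ∪ A₁', S.card ≤ 1 ∧ v (A₂' \ S) ≥ v (A₁' \ S))) :=
  stmt_8_general v hmono A₁ A₂ A₁' A₂' hA hA' hoa1 hoa2 h1 h2
end

section
/- Fix an integer c ≥ 1 and intervals I_i = (ℓ_i, r_i] of the real line for i = 1,...,m, with all 2m endpoints distinct and r_1 < r_2 < ... < r_m. Then there exists a c-feasible set S ⊆ {1,...,m} such that for every c-feasible set S' ⊆ {1,...,m} and every i' ∈ {1,...,m}, |S' ∩ {1,...,i'}| ≤ |S ∩ {1,...,i'}|. In particular, S has maximum cardinality among all c-feasible sets. -/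
/-!
The greedy algorithm scans the intervals by increasing right endpoint and keeps each one that
leaves the chosen set `c`-feasible. By induction on `k`, every `c`-feasible set `B` can be
turned, without decreasing any prefix count, into a `c`-feasible set that agrees with the greedy
choice on the first `k` intervals. The only nontrivial case is when the greedy keeps interval `a`
but `B ∪ {a}` is not `c`-feasible. Since the greedy set plus `a` is feasible, each overloaded
point of `I_a` is covered by an interval of `B` with index larger than `a`. Such an interval ends
after `r_a`, so it covers a point of `I_a` exactly when it starts before that point. Hence the
later interval of `B` with the leftmost left endpoint covers every overloaded point, and it can
be exchanged for `a`.
-/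

/-- A set `S` of interval indices is `c`-feasible: every point of the real line belongs to
at most `c` of the intervals `(ℓ i, r i]` with `i ∈ S`. -/
def CFeasible {m : ℕ} (c : ℕ) (ℓ r : Fin m → ℝ) (S : Finset (Fin m)) : Prop :=
  ∀ x : ℝ, ∀ T ⊆ S, (∀ i ∈ T, x ∈ Set.Ioc (ℓ i) (r i)) → T.card ≤ c

open Finset

section PrefixLE

variable {α : Type*} [LinearOrder α] {s t u : Finset α}

def PrefixLE (s t : Finset α) : Prop :=
  ∀ x, #{i ∈ s | i ≤ x} ≤ #{i ∈ t | i ≤ x}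

namespace PrefixLE

theorem refl (s : Finset α) : PrefixLE s s := fun _ => le_rfl

theorem trans (h₁ : PrefixLE s t) (h₂ : PrefixLE t u) : PrefixLE s u :=
  fun x => (h₁ x).trans (h₂ x)

theorem card_le (h : PrefixLE s t) : #s ≤ #t := by
  rcases s.eq_empty_or_nonempty with rfl | hs
  · simp
  calc #s = #{i ∈ s | i ≤ s.max' hs} := by rw [filter_true_of_mem fun i hi => le_max' s i hi]
    _ ≤ #{i ∈ t | i ≤ s.max' hs} := h _
    _ ≤ #t := card_filter_le _ _

end PrefixLE

theorem prefixLE_of_subset (h : s ⊆ t) : PrefixLE s t :=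
  fun _ => card_le_card (filter_subset_filter _ h)

theorem prefixLE_insert_erase {i j : α} (hi : i ∉ s) (hj : j ∈ s) (hij : i < j) :
    PrefixLE s (insert i (s.erase j)) := by
  intro x
  refine card_le_card_of_injOn (Equiv.swap i j) (fun a ha => ?_) (Equiv.injective _).injOn
  rw [coe_filter] at ha
  obtain ⟨has, hax⟩ := ha
  have hai : a ≠ i := by rintro rfl; exact hi has
  by_cases haj : a = j
  · subst haj
    simp [hij.le.trans hax]
  · simp [Equiv.swap_apply_of_ne_of_ne hai haj, haj, has, hax]

end PrefixLE

section Depth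

variable {m c : ℕ} {ℓ r : Fin m → ℝ} {S T : Finset (Fin m)} {a j : Fin m} {x : ℝ}

noncomputable def depth (ℓ r : Fin m → ℝ) (S : Finset (Fin m)) (x : ℝ) : ℕ :=
  #{i ∈ S | x ∈ Set.Ioc (ℓ i) (r i)}

theorem cfeasible_iff_depth_le : CFeasible c ℓ r S ↔ ∀ x, depth ℓ r S x ≤ c :=
  ⟨fun h x => h x _ (filter_subset _ _) fun _ hi => (mem_filter.mp hi).2,
    fun h x _ hTS hT => (card_le_card fun i hi => mem_filter.mpr ⟨hTS hi, hT i hi⟩).trans (h x)⟩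

theorem CFeasible.mono (h : S ⊆ T) (hT : CFeasible c ℓ r T) : CFeasible c ℓ r S :=
  fun x U hU hcov => hT x U (hU.trans h) hcov

theorem cfeasible_empty : CFeasible c ℓ r ∅ :=
  fun _ _ hU _ => by simp [subset_empty.mp hU]

theorem depth_mono (h : S ⊆ T) (x : ℝ) : depth ℓ r S x ≤ depth ℓ r T x :=
  card_le_card (filter_subset_filter _ h)

theorem depth_insert_of_mem (ha : a ∉ S) (hx : x ∈ Set.Ioc (ℓ a) (r a)) :
    depth ℓ r (insert a S) x = depth ℓ r S x + 1 := by
  rw [depth, filter_insert, if_pos hx, card_insert_of_notMem fun h => ha (mem_filter.mp h).1]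
  rfl

theorem depth_insert_of_notMem (hx : x ∉ Set.Ioc (ℓ a) (r a)) :
    depth ℓ r (insert a S) x = depth ℓ r S x := by
  rw [depth, filter_insert, if_neg hx]
  rfl

theorem depth_erase_add_one (hj : j ∈ S) (hx : x ∈ Set.Ioc (ℓ j) (r j)) :
    depth ℓ r (S.erase j) x + 1 = depth ℓ r S x := by
  rw [depth, filter_erase]
  exact card_erase_add_one (mem_filter.mpr ⟨hj, hx⟩)

theorem depth_filter_add_depth_filter_not (p : Fin m → Prop) [DecidablePred p] :
    depth ℓ r {i ∈ S | p i} x + depth ℓ r {i ∈ S | ¬ p i} x = depth ℓ r S x := by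
  simp only [depth]
  rw [← card_filter_add_card_filter_not (s := {i ∈ S | x ∈ Set.Ioc (ℓ i) (r i)}) p]
  simp only [filter_filter, and_comm]

end Depth

section Exchange

variable {m c : ℕ} {ℓ r : Fin m → ℝ} {B : Finset (Fin m)} {a : Fin m}

theorem exists_later_cover (ha : a ∉ B) (hpre : CFeasible c ℓ r (insert a {i ∈ B | i < a}))
    {y : ℝ} (hy : y ∈ Set.Ioc (ℓ a) (r a)) (hsat : c ≤ depth ℓ r B y) :
    ∃ j ∈ B, a < j ∧ y ∈ Set.Ioc (ℓ j) (r j) := by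
  have hbelow : depth ℓ r {i ∈ B | i < a} y + 1 ≤ c := by
    rw [← depth_insert_of_mem (by simp) hy]
    exact cfeasible_iff_depth_le.mp hpre y
  have hsplit := depth_filter_add_depth_filter_not (S := B) (ℓ := ℓ) (r := r) (x := y) (· < a)
  obtain ⟨j, hj⟩ := card_pos.mp (show 0 < depth ℓ r {i ∈ B | ¬ i < a} y by omega)
  simp only [mem_filter, not_lt] at hj
  obtain ⟨⟨hjB, hja⟩, hyj⟩ := hj
  exact ⟨j, hjB, hja.lt_of_ne (by rintro rfl; exact ha hjB), hyj⟩

theorem exists_cfeasible_insert_erase (hr : StrictMono r) (hB : CFeasible c ℓ r B) (ha : a ∉ B)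
    (hpre : CFeasible c ℓ r (insert a {i ∈ B | i < a})) (hins : ¬ CFeasible c ℓ r (insert a B)) :
    ∃ j ∈ B, a < j ∧ CFeasible c ℓ r (insert a (B.erase j)) := by
  rw [cfeasible_iff_depth_le] at hB hins
  obtain ⟨x, hx⟩ := not_forall.mp hins
  rw [not_le] at hx
  have hxa : x ∈ Set.Ioc (ℓ a) (r a) := by
    by_contra h
    rw [depth_insert_of_notMem h] at hx
    exact hx.not_ge (hB x)
  have hsat : c ≤ depth ℓ r B x := by
    rw [depth_insert_of_mem ha hxa] at hx
    omega
  obtain ⟨j₀, hj₀B, haj₀, -⟩ := exists_later_cover ha hpre hxa hsat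
  obtain ⟨j, hj, hjmin⟩ :=
    exists_min_image {i ∈ B | a < i} ℓ ⟨j₀, mem_filter.mpr ⟨hj₀B, haj₀⟩⟩
  rw [mem_filter] at hj
  have hcover : ∀ y ∈ Set.Ioc (ℓ a) (r a), c ≤ depth ℓ r B y → y ∈ Set.Ioc (ℓ j) (r j) := by
    intro y hy hsat
    obtain ⟨j', hj'B, haj', hy'⟩ := exists_later_cover ha hpre hy hsat
    exact ⟨(hjmin j' (mem_filter.mpr ⟨hj'B, haj'⟩)).trans_lt hy'.1, hy.2.trans (hr hj.2).le⟩
  refine ⟨j, hj.1, hj.2, cfeasible_iff_depth_le.mpr fun y => ?_⟩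
  have herase := depth_mono (ℓ := ℓ) (r := r) (erase_subset j B) y
  by_cases hya : y ∈ Set.Ioc (ℓ a) (r a)
  · rw [depth_insert_of_mem (fun h => ha (mem_of_mem_erase h)) hya]
    by_cases hsat : c ≤ depth ℓ r B y
    · have := depth_erase_add_one hj.1 (hcover y hya hsat)
      have := hB y
      omega
    · omega
  · rw [depth_insert_of_notMem hya]
    exact herase.trans (hB y)

theorem exists_prefixLE_mem (hr : StrictMono r) (hB : CFeasible c ℓ r B)
    (hpre : CFeasible c ℓ r (insert a {i ∈ B | i < a})) :
    ∃ B', CFeasible c ℓ r B' ∧ PrefixLE B B' ∧ a ∈ B' ∧ ∀ i < a, (i ∈ B' ↔ i ∈ B) := by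
  by_cases ha : a ∈ B
  · exact ⟨B, hB, .refl B, ha, fun _ _ => Iff.rfl⟩
  by_cases hins : CFeasible c ℓ r (insert a B)
  · exact ⟨insert a B, hins, prefixLE_of_subset (subset_insert a B), mem_insert_self a B,
      fun i hi => by simp [hi.ne]⟩
  obtain ⟨j, hjB, haj, hfeas⟩ := exists_cfeasible_insert_erase hr hB ha hpre hins
  exact ⟨_, hfeas, prefixLE_insert_erase ha hjB haj, mem_insert_self _ _,
    fun i hi => by simp [hi.ne, (hi.trans haj).ne]⟩

end Exchange

section Greedy

variable {m c : ℕ} {ℓ r : Fin m → ℝ}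

open Classical in
noncomputable def greedy (c : ℕ) (ℓ r : Fin m → ℝ) : ℕ → Finset (Fin m)
  | 0 => ∅
  | k + 1 =>
    if h : k < m then
      if CFeasible c ℓ r (insert ⟨k, h⟩ (greedy c ℓ r k)) then insert ⟨k, h⟩ (greedy c ℓ r k)
      else greedy c ℓ r k
    else greedy c ℓ r k

open Classical in
theorem greedy_succ {k : ℕ} (h : k < m) :
    greedy c ℓ r (k + 1) =
      if CFeasible c ℓ r (insert ⟨k, h⟩ (greedy c ℓ r k)) then insert ⟨k, h⟩ (greedy c ℓ r k)
      else greedy c ℓ r k :=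
  dif_pos h

theorem cfeasible_greedy (k : ℕ) : CFeasible c ℓ r (greedy c ℓ r k) := by
  induction k with
  | zero => exact cfeasible_empty
  | succ k ih =>
    simp only [greedy]
    split_ifs with _ h
    exacts [h, ih, ih]

theorem exists_prefixLE_filter_eq_greedy (hr : StrictMono r) {B : Finset (Fin m)}
    (hB : CFeasible c ℓ r B) {k : ℕ} (hk : k ≤ m) :
    ∃ B', CFeasible c ℓ r B' ∧ PrefixLE B B' ∧ {i ∈ B' | i.val < k} = greedy c ℓ r k := by
  induction k with
  | zero => exact ⟨B, hB, .refl B, by simp [greedy]⟩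
  | succ k ih =>
    obtain ⟨B₁, hB₁, hle₁, hG⟩ := ih (by omega)
    have hkm : k < m := by omega
    obtain ⟨a, rfl⟩ : ∃ a : Fin m, (a : ℕ) = k := ⟨⟨k, hkm⟩, rfl⟩
    have hGa : greedy c ℓ r a = {i ∈ B₁ | i < a} := hG.symm
    by_cases hacc : CFeasible c ℓ r (insert a (greedy c ℓ r a))
    · obtain ⟨B₂, hB₂, hle₂, ha₂, hagree⟩ := exists_prefixLE_mem hr hB₁ (hGa ▸ hacc)
      refine ⟨B₂, hB₂, hle₁.trans hle₂, ?_⟩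
      rw [greedy_succ hkm, Fin.eta, if_pos hacc, hGa]
      ext i
      rcases lt_trichotomy i a with hi | rfl | hi
      · have : (i : ℕ) < a := hi
        simp [hi, hi.ne, hagree i hi]
        omega
      · simp [ha₂]
      · have : (a : ℕ) < i := hi
        simp [hi.ne', hi.not_gt]
        omega
    · have haB₁ : a ∉ B₁ := fun ha =>
        hacc (hB₁.mono (insert_subset ha (hG ▸ filter_subset _ B₁)))
      refine ⟨B₁, hB₁, hle₁, ?_⟩
      rw [greedy_succ hkm, Fin.eta, if_neg hacc, ← hG]
      ext i
      simp only [mem_filter, and_congr_right_iff]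
      intro hi
      have : (i : ℕ) ≠ a := Fin.val_ne_of_ne fun h => haB₁ (h ▸ hi)
      omega

theorem prefixLE_greedy (hr : StrictMono r) {B : Finset (Fin m)} (hB : CFeasible c ℓ r B) :
    PrefixLE B (greedy c ℓ r m) := by
  obtain ⟨B', -, hle, hG⟩ := exists_prefixLE_filter_eq_greedy hr hB le_rfl
  rwa [← hG, filter_true_of_mem fun i _ => i.isLt]

end Greedy

theorem stmt_9_general (m c : ℕ) (ℓ r : Fin m → ℝ)
    (hsorted : StrictMono r) :
    ∃ S : Finset (Fin m), CFeasible c ℓ r S ∧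
      ∀ S' : Finset (Fin m), CFeasible c ℓ r S' →
        (∀ i' : Fin m,
          (S'.filter (fun i => i ≤ i')).card ≤ (S.filter (fun i => i ≤ i')).card) ∧
        S'.card ≤ S.card := by
  refine ⟨greedy c ℓ r m, cfeasible_greedy m, fun S' hS' => ?_⟩
  have hdom := prefixLE_greedy hsorted hS'
  exact ⟨hdom, hdom.card_le⟩

/-- the greedy solution of the (m, c)-interval scheduling problem dominates
every c-feasible set prefix-wise; in particular it has maximum cardinality. -/
theorem stmt_9 (m c : ℕ) (hc : 1 ≤ c) (ℓ r : Fin m → ℝ)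
    (hdistinct : Function.Injective (Sum.elim ℓ r : Fin m ⊕ Fin m → ℝ))
    (hsorted : StrictMono r) :
    ∃ S : Finset (Fin m), CFeasible c ℓ r S ∧
      ∀ S' : Finset (Fin m), CFeasible c ℓ r S' →
        (∀ i' : Fin m,
          (S'.filter (fun i => i ≤ i')).card ≤ (S.filter (fun i => i ≤ i')).card) ∧
        S'.card ≤ S.card :=
  stmt_9_general m c ℓ r hsorted
end

section
/- For two agents with monotone non-decreasing valuations v_1, v_2 (with v_1(∅) = v_2(∅) = 0) and any finite bipartite conflict graph G, there exists an allocation (A_1, A_2) that is both maximal and EF1. -/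
/-!
Colour the bipartite conflict graph with sides `X` and `Xᶜ`, labelled so that agent `0` weakly
prefers `Xᶜ`. For `U ⊆ Xᶜ` consider the two independent bundles
`L U = U ∪ {x ∈ X | x has no neighbour in U}` and
`R U = (Xᶜ \ U) ∪ {x ∈ X | x has a neighbour and all its neighbours lie in U}`,
which form a maximal allocation. At `U = ∅` agent `0` prefers `R`, at `U = Xᶜ` she prefers `L`,
and removing a vertex `y` from `U` makes `L` smaller and `R` larger, up to the single item `y`.
A discrete intermediate value argument therefore finds a `U` for which agent `0` is EF1
towards either bundle; agent `1` chooses her preferred bundle and agent `0` takes the other.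
-/

open Finset

section

variable {α : Type*} [DecidableEq α]

def EnvyFreeUpToOne (w : Finset α → ℝ) (A B : Finset α) : Prop :=
  ∃ S ⊆ A ∪ B, S.card ≤ 1 ∧ w (B \ S) ≤ w (A \ S)

lemma EnvyFreeUpToOne.of_le {w : Finset α → ℝ} {A B : Finset α} (h : w B ≤ w A) :
    EnvyFreeUpToOne w A B :=
  ⟨∅, empty_subset _, by simp, by simpa using h⟩

/-- Discrete intermediate value theorem for envy up to one item. -/
theorem exists_envyFreeUpToOne_both {ι : Type*} {w : Finset α → ℝ} (hw : Monotone w)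
    (A B : Finset ι → Finset α) {U₀ : Finset ι}
    (hU₀ : w (B U₀) ≤ w (A U₀)) (hempty : w (A ∅) ≤ w (B ∅))
    (hstep : ∀ U ⊆ U₀, U.Nonempty → ∃ U' ⊂ U, ∃ a ∈ A U, a ∈ B U' ∧
      A U \ {a} ⊆ A U' ∧ B U' \ {a} ⊆ B U) :
    ∃ U ⊆ U₀, EnvyFreeUpToOne w (A U) (B U) ∧ EnvyFreeUpToOne w (B U) (A U) := by
  obtain ⟨U, hUU₀, hmin⟩ :=
    exists_minimal_le_of_wellFoundedLT (fun U => w (B U) ≤ w (A U)) U₀ hU₀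
  by_cases hBA : EnvyFreeUpToOne w (B U) (A U)
  · exact ⟨U, hUU₀, .of_le hmin.prop, hBA⟩
  have hU : U.Nonempty := nonempty_iff_ne_empty.2 <| by
    rintro rfl
    exact hBA (.of_le hempty)
  obtain ⟨U', hU'U, a, haA, haB, hAsub, hBsub⟩ := hstep U hUU₀ hU
  have hlt : w (A U') < w (B U') := not_le.1 (hmin.not_prop_of_lt hU'U)
  have hdrop : w (B U \ {a}) < w (A U \ {a}) := by
    by_contra h
    exact hBA ⟨{a}, by simp [haA], by simp, not_lt.1 h⟩
  refine ⟨U', hU'U.subset.trans hUU₀, ⟨{a}, by simp [haB], by simp, ?_⟩, .of_le hlt.le⟩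
  calc w (B U' \ {a}) ≤ w (B U \ {a}) := hw (subset_sdiff.2 ⟨hBsub, disjoint_sdiff_self_left⟩)
    _ ≤ w (A U \ {a}) := hdrop.le
    _ ≤ w (A U' \ {a}) := hw (subset_sdiff.2 ⟨hAsub, disjoint_sdiff_self_left⟩)

namespace SimpleGraph

variable [Fintype α] (G : SimpleGraph α)

lemma exists_bipartition_side_le {P : α → Bool} (hP : ∀ x y, G.Adj x y → P x ≠ P y)
    (w : Finset α → ℝ) :
    ∃ X : Finset α, (∀ x y, G.Adj x y → (x ∈ X ↔ y ∉ X)) ∧ w X ≤ w Xᶜ := by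
  set X : Finset α := {x | P x = true}
  have hX : ∀ x y, G.Adj x y → (x ∈ X ↔ y ∉ X) := by
    intro x y hxy
    simp only [X, mem_filter, mem_univ, true_and]
    have := hP x y hxy
    revert this
    cases P x <;> cases P y <;> simp
  rcases le_total (w X) (w Xᶜ) with h | h
  · exact ⟨X, hX, h⟩
  · refine ⟨Xᶜ, fun x y hxy => ?_, by rwa [compl_compl]⟩
    simpa only [mem_compl] using (hX x y hxy).not

variable [DecidableRel G.Adj]

def leftBundle (X U : Finset α) : Finset α :=
  U ∪ {x ∈ X | ∀ u ∈ U, ¬ G.Adj x u}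

def rightBundle (X U : Finset α) : Finset α :=
  (Xᶜ \ U) ∪ {x ∈ X | (∃ u ∈ U, G.Adj x u) ∧ ∀ y, G.Adj x y → y ∈ U}

variable {G} {X U : Finset α}

@[simp]
lemma mem_leftBundle {a : α} :
    a ∈ G.leftBundle X U ↔ a ∈ U ∨ a ∈ X ∧ ∀ u ∈ U, ¬ G.Adj a u := by
  simp [leftBundle]

@[simp]
lemma mem_rightBundle {a : α} :
    a ∈ G.rightBundle X U ↔
      a ∉ X ∧ a ∉ U ∨
        a ∈ X ∧ (∃ u ∈ U, G.Adj a u) ∧ ∀ y, G.Adj a y → y ∈ U := by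
  simp [rightBundle]

lemma leftBundle_empty : G.leftBundle X ∅ = X := by
  ext; simp

lemma rightBundle_empty : G.rightBundle X ∅ = Xᶜ := by
  ext; simp

lemma subset_leftBundle : U ⊆ G.leftBundle X U :=
  subset_union_left

lemma rightBundle_compl_subset : G.rightBundle X Xᶜ ⊆ X := by
  intro a; simp +contextual

lemma disjoint_leftBundle_rightBundle (hU : U ⊆ Xᶜ) :
    Disjoint (G.leftBundle X U) (G.rightBundle X U) := by
  refine Finset.disjoint_left.2 fun a ha hb => ?_
  simp only [mem_leftBundle, mem_rightBundle] at ha hb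
  rcases ha with haU | ⟨haX, hfree⟩
  · have := mem_compl.1 (hU haU)
    tauto
  · obtain ⟨u, hu, hau⟩ := (hb.resolve_left fun h => h.1 haX).2.1
    exact hfree u hu hau

lemma leftBundle_sdiff_singleton_subset {y : α} :
    G.leftBundle X U \ {y} ⊆ G.leftBundle X (U.erase y) := by
  intro a
  simp only [mem_sdiff, mem_singleton, mem_leftBundle, mem_erase]
  rintro ⟨hU | ⟨haX, hfree⟩, hay⟩
  · exact .inl ⟨hay, hU⟩
  · exact .inr ⟨haX, fun u hu => hfree u hu.2⟩

lemma rightBundle_erase_sdiff_singleton_subset {y : α} :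
    G.rightBundle X (U.erase y) \ {y} ⊆ G.rightBundle X U := by
  intro a
  simp only [mem_sdiff, mem_singleton, mem_rightBundle, mem_erase]
  rintro ⟨⟨haX, haU⟩ | ⟨haX, ⟨u, hu, hau⟩, hnbr⟩, hay⟩
  · exact .inl ⟨haX, fun h => haU ⟨hay, h⟩⟩
  · exact .inr ⟨haX, ⟨u, hu.2, hau⟩, fun b hb => (hnbr b hb).2⟩

lemma leftBundle_isIndep (hX : ∀ x y, G.Adj x y → (x ∈ X ↔ y ∉ X)) (hU : U ⊆ Xᶜ) :
    ∀ x ∈ G.leftBundle X U, ∀ y ∈ G.leftBundle X U, ¬ G.Adj x y := by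
  intro x hx y hy hxy
  have hxy' := hX x y hxy
  rw [mem_leftBundle] at hx hy
  rcases hx with hxU | ⟨hxX, hxfree⟩ <;> rcases hy with hyU | ⟨hyX, hyfree⟩
  · exact mem_compl.1 (hU hxU) (hxy'.2 (mem_compl.1 (hU hyU)))
  · exact hyfree x hxU hxy.symm
  · exact hxfree y hyU hxy
  · exact hxy'.1 hxX hyX

lemma rightBundle_isIndep (hX : ∀ x y, G.Adj x y → (x ∈ X ↔ y ∉ X)) :
    ∀ x ∈ G.rightBundle X U, ∀ y ∈ G.rightBundle X U, ¬ G.Adj x y := by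
  intro x hx y hy hxy
  have hxy' := hX x y hxy
  rw [mem_rightBundle] at hx hy
  rcases hx with ⟨hxX, hxU⟩ | ⟨hxX, -, hxnbr⟩ <;>
    rcases hy with ⟨hyX, hyU⟩ | ⟨hyX, -, hynbr⟩
  · exact hxX (hxy'.2 hyX)
  · exact hxU (hynbr x hxy.symm)
  · exact hyU (hxnbr y hxy)
  · exact hxy'.1 hxX hyX

lemma exists_adj_of_notMem_bundles (hX : ∀ x y, G.Adj x y → (x ∈ X ↔ y ∉ X)) {o : α}
    (hL : o ∉ G.leftBundle X U) (hR : o ∉ G.rightBundle X U) :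
    (∃ x ∈ G.leftBundle X U, G.Adj o x) ∧ ∃ x ∈ G.rightBundle X U, G.Adj o x := by
  simp only [mem_leftBundle, mem_rightBundle, not_or, not_and, not_forall, not_not] at hL hR
  have hoX : o ∈ X := by_contra fun hoX => hL.1 (hR.1 hoX)
  obtain ⟨u, hu, hou⟩ := hL.2 hoX
  obtain ⟨y, hoy, hyU⟩ := hR.2 hoX ⟨u, hu, hou⟩
  exact ⟨⟨u, mem_leftBundle.2 (.inl hu), hou⟩,
    ⟨y, mem_rightBundle.2 (.inl ⟨(hX o y hoy).1 hoX, hyU⟩), hoy⟩⟩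

theorem exists_envyFreeUpToOne_bundles {w : Finset α → ℝ} (hw : Monotone w)
    (hXw : w X ≤ w Xᶜ) :
    ∃ U ⊆ Xᶜ, EnvyFreeUpToOne w (G.leftBundle X U) (G.rightBundle X U) ∧
      EnvyFreeUpToOne w (G.rightBundle X U) (G.leftBundle X U) := by
  refine exists_envyFreeUpToOne_both hw (G.leftBundle X) (G.rightBundle X) ?_ ?_ ?_
  · calc w (G.rightBundle X Xᶜ) ≤ w X := hw rightBundle_compl_subset
      _ ≤ w Xᶜ := hXw
      _ ≤ w (G.leftBundle X Xᶜ) := hw subset_leftBundle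
  · rwa [leftBundle_empty, rightBundle_empty]
  · rintro U hU ⟨y, hy⟩
    refine ⟨U.erase y, erase_ssubset hy, y, subset_leftBundle hy, ?_,
      leftBundle_sdiff_singleton_subset, rightBundle_erase_sdiff_singleton_subset⟩
    simp [mem_compl.1 (hU hy)]

end SimpleGraph

theorem exists_fin_two_of_cut_and_choose {G : SimpleGraph α} {v : Fin 2 → Finset α → ℝ}
    {B C : Finset α} (hBC : Disjoint B C) (hB : ∀ x ∈ B, ∀ y ∈ B, ¬ G.Adj x y)
    (hC : ∀ x ∈ C, ∀ y ∈ C, ¬ G.Adj x y)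
    (hmax : ∀ o, o ∉ B → o ∉ C → (∃ x ∈ B, G.Adj o x) ∧ ∃ x ∈ C, G.Adj o x)
    (h0 : EnvyFreeUpToOne (v 0) B C) (h1 : v 1 B ≤ v 1 C) :
    ∃ A : Fin 2 → Finset α,
      (∀ i j : Fin 2, i ≠ j → Disjoint (A i) (A j)) ∧
      (∀ i : Fin 2, ∀ x ∈ A i, ∀ y ∈ A i, ¬ G.Adj x y) ∧
      (∀ o : α, (∀ i : Fin 2, o ∉ A i) → ∀ i : Fin 2, ∃ x ∈ A i, G.Adj o x) ∧
      (∀ i j : Fin 2, EnvyFreeUpToOne (v i) (A i) (A j)) := by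
  refine ⟨![B, C], ?_, ?_, ?_, ?_⟩ <;>
    simp only [Fin.forall_fin_two, Matrix.cons_val_zero, Matrix.cons_val_one, ne_eq,
      not_true_eq_false, IsEmpty.forall_iff, true_and, and_true]
  · exact ⟨fun _ => hBC, fun _ => hBC.symm⟩
  · exact ⟨hB, hC⟩
  · exact fun o ho => hmax o ho.1 ho.2
  · exact ⟨⟨.of_le le_rfl, h0⟩, .of_le h1, .of_le le_rfl⟩

end

theorem stmt_11_general {α : Type*} [Fintype α] [DecidableEq α] (G : SimpleGraph α)
    (hbip : ∃ P : α → Bool, ∀ x y : α, G.Adj x y → P x ≠ P y)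
    (v : Fin 2 → Finset α → ℝ)
    (hmono : ∀ i, ∀ S T : Finset α, S ⊆ T → v i S ≤ v i T) :
    ∃ A : Fin 2 → Finset α,
      (∀ i j : Fin 2, i ≠ j → Disjoint (A i) (A j)) ∧
      (∀ i : Fin 2, ∀ x ∈ A i, ∀ y ∈ A i, ¬ G.Adj x y) ∧
      (∀ o : α, (∀ i : Fin 2, o ∉ A i) → ∀ i : Fin 2, ∃ x ∈ A i, G.Adj o x) ∧
      (∀ i j : Fin 2, ∃ S : Finset α, S ⊆ A i ∪ A j ∧ S.card ≤ 1 ∧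
        v i (A i \ S) ≥ v i (A j \ S)) := by
  classical
  obtain ⟨P, hP⟩ := hbip
  obtain ⟨X, hX, hXw⟩ := G.exists_bipartition_side_le hP (v 0)
  obtain ⟨U, hU, hLR, hRL⟩ :=
    G.exists_envyFreeUpToOne_bundles (fun S T => hmono 0 S T) hXw
  have hdisj := G.disjoint_leftBundle_rightBundle hU
  have hL := G.leftBundle_isIndep hX hU
  have hR := G.rightBundle_isIndep (U := U) hX
  have hmax (o : α) (hoL : o ∉ G.leftBundle X U) (hoR : o ∉ G.rightBundle X U) :=
    G.exists_adj_of_notMem_bundles hX hoL hoR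
  rcases le_total (v 1 (G.leftBundle X U)) (v 1 (G.rightBundle X U)) with h | h
  · exact exists_fin_two_of_cut_and_choose hdisj hL hR hmax hLR h
  · exact exists_fin_two_of_cut_and_choose hdisj.symm hR hL
      (fun o hoR hoL => (hmax o hoL hoR).symm) hRL h

/-- for two agents with monotone non-decreasing valuations and any bipartite
conflict graph, a maximal and EF1 allocation exists. -/
theorem stmt_11 {α : Type*} [Fintype α] [DecidableEq α] (G : SimpleGraph α)
    (hbip : ∃ P : α → Bool, ∀ x y : α, G.Adj x y → P x ≠ P y)
    (v : Fin 2 → Finset α → ℝ)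
    (hzero : ∀ i, v i ∅ = 0)
    (hmono : ∀ i, ∀ S T : Finset α, S ⊆ T → v i S ≤ v i T) :
    ∃ A : Fin 2 → Finset α,
      (∀ i j : Fin 2, i ≠ j → Disjoint (A i) (A j)) ∧
      (∀ i : Fin 2, ∀ x ∈ A i, ∀ y ∈ A i, ¬ G.Adj x y) ∧
      (∀ o : α, (∀ i : Fin 2, o ∉ A i) → ∀ i : Fin 2, ∃ x ∈ A i, G.Adj o x) ∧
      (∀ i j : Fin 2, ∃ S : Finset α, S ⊆ A i ∪ A j ∧ S.card ≤ 1 ∧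
        v i (A i \ S) ≥ v i (A j \ S)) :=
  stmt_11_general G hbip v hmono
end

section
/- Consider two agents and two items o_1, o_2 whose conflict graph is the single edge {o_1, o_2}, and where both agents have the same additive valuation v with v(o_1) = 1 and v(o_2) = −1. Then no allocation (A_1, A_2) is both maximal and EF1. (In particular, for two agents with identical additive non-monotone valuations on a path graph, a maximal EF1 allocation may fail to exist.) -/
/-!
Along the single edge, a bundle holds at most one item. If an item were left over, maximality
would force each agent to hold the other item, which disjointness forbids; so the good and the
chore are both allocated, one to each agent. The agent holding the chore values its own bundle
below the other's even after removing any single item.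
-/

/-- The identical additive valuation with values 1 (a good) and -1 (a chore). -/
noncomputable def v12 (S : Finset (Fin 2)) : ℝ := ∑ o ∈ S, (![1, -1] : Fin 2 → ℝ) o

lemma eq_singleton_of_mem_of_forall_eq {s : Finset (Fin 2)} {o : Fin 2}
    (hind : ∀ x ∈ s, ∀ y ∈ s, ¬ x ≠ y) (ho : o ∈ s) : s = {o} :=
  Finset.eq_singleton_iff_unique_mem.mpr ⟨ho, fun x hx => not_ne_iff.mp (hind x hx o ho)⟩

lemma exists_mem_of_maximal {A : Fin 2 → Finset (Fin 2)}
    (hdisj : ∀ i j : Fin 2, i ≠ j → Disjoint (A i) (A j))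
    (hmax : ∀ o : Fin 2, (∀ i : Fin 2, o ∉ A i) → ∀ i : Fin 2, ∃ x ∈ A i, o ≠ x)
    (o : Fin 2) : ∃ i, o ∈ A i := by
  by_contra! hfree
  obtain ⟨x, hx, hxo⟩ := hmax o hfree 0
  obtain ⟨y, hy, hyo⟩ := hmax o hfree 1
  have hxy : x = y := by omega
  exact Finset.disjoint_left.mp (hdisj 0 1 (by decide)) hx (hxy ▸ hy)

lemma v12_sdiff_chore_lt_sdiff_good {S : Finset (Fin 2)} (hS : S.card ≤ 1) :
    v12 ({1} \ S) < v12 ({0} \ S) := by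
  have hcases : S = ∅ ∨ S = {0} ∨ S = {1} :=
    (by decide : ∀ S : Finset (Fin 2), S.card ≤ 1 → S = ∅ ∨ S = {0} ∨ S = {1}) S hS
  rcases hcases with rfl | rfl | rfl <;> norm_num [v12, Finset.sdiff_singleton_eq_erase]

/-- two items joined by a single edge, one good of value 1 and one chore of
value -1; no allocation is both maximal and EF1. -/
theorem stmt_12 :
    ¬ ∃ A : Fin 2 → Finset (Fin 2),
      (∀ i j : Fin 2, i ≠ j → Disjoint (A i) (A j)) ∧
      (∀ i : Fin 2, ∀ x ∈ A i, ∀ y ∈ A i, ¬ x ≠ y) ∧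
      (∀ o : Fin 2, (∀ i : Fin 2, o ∉ A i) → ∀ i : Fin 2, ∃ x ∈ A i, o ≠ x) ∧
      (∀ i j : Fin 2, ∃ S : Finset (Fin 2), S ⊆ A i ∪ A j ∧ S.card ≤ 1 ∧
        v12 (A i \ S) ≥ v12 (A j \ S)) := by
  rintro ⟨A, hdisj, hind, hmax, hEF1⟩
  obtain ⟨iGood, hGood⟩ := exists_mem_of_maximal hdisj hmax 0
  obtain ⟨iChore, hChore⟩ := exists_mem_of_maximal hdisj hmax 1
  obtain ⟨S, -, hS, hv⟩ := hEF1 iChore iGood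
  rw [eq_singleton_of_mem_of_forall_eq (hind iChore) hChore,
    eq_singleton_of_mem_of_forall_eq (hind iGood) hGood] at hv
  exact (v12_sdiff_chore_lt_sdiff_good hS).not_ge hv
end

section
/- For every integer n ≥ 2, consider n agents and n items o_1,...,o_n whose conflict graph is the complete graph K_n on the items. All agents share the additive valuation v with v(o_i) = 1 for i = 1,...,n−1 and v(o_n) = −1. Then no allocation (A_1,...,A_n) is both maximal and EF1. -/
/-!
If some item were unallocated, maximality on the complete conflict graph would force every one
of the `n` bundles to be nonempty, and `n` disjoint nonempty bundles of `n` items cover every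
item. So every item is allocated, and independence makes each bundle a singleton. The agent
holding the chore `o_n` then envies the agent holding a good: removing at most one item from the
two bundles `{o_n}` and `{o_1}` always leaves the first strictly worse.
-/

open Finset Function

theorem Finset.exists_mem_of_pairwiseDisjoint_of_nonempty {ι α : Type*} [Fintype ι]
    [Fintype α] (hcard : Fintype.card α ≤ Fintype.card ι) {A : ι → Finset α}
    (hdisj : Pairwise (Disjoint on A)) (hne : ∀ i, (A i).Nonempty) (o : α) : ∃ i, o ∈ A i := by
  choose g hg using hne
  have hinj : Injective g := fun i j hij => by
    by_contra hij'
    exact disjoint_left.mp (hdisj hij') (hg i) (hij ▸ hg j)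
  have hbij : Bijective g :=
    (Fintype.bijective_iff_injective_and_card g).mpr
      ⟨hinj, le_antisymm (Fintype.card_le_of_injective g hinj) hcard⟩
  obtain ⟨i, rfl⟩ := hbij.surjective o
  exact ⟨i, hg i⟩

theorem Finset.sum_singleton_sdiff {α M : Type*} [DecidableEq α] [AddCommMonoid M] (v : α → M)
    (x : α) (S : Finset α) : ∑ o ∈ {x} \ S, v o = if x ∈ S then 0 else v x := by
  rw [sdiff_eq_filter, sum_filter, sum_singleton, ite_not]

theorem Finset.sum_singleton_sdiff_lt {α M : Type*} [DecidableEq α] [AddCommMonoid M]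
    [PartialOrder M] {v : α → M} {c g : α} (hc : v c < 0) (hg : 0 < v g) (hcg : c ≠ g)
    {S : Finset α} (hS : #S ≤ 1) : ∑ o ∈ {c} \ S, v o < ∑ o ∈ {g} \ S, v o := by
  rw [sum_singleton_sdiff, sum_singleton_sdiff]
  by_cases hcS : c ∈ S <;> by_cases hgS : g ∈ S
  · exact absurd (card_le_one.mp hS c hcS g hgS) hcg
  all_goals simp only [hcS, hgS, if_true, if_false]
  · exact hg
  · exact hc
  · exact hc.trans hg

/-- for n ≥ 2 agents and n items on the complete conflict graph K_n, with
identical additive valuation giving value 1 to the first n - 1 items (goods) and -1 to the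
last item (a chore), no allocation is both maximal and EF1. -/
theorem stmt_15 (n : ℕ) (hn : 2 ≤ n) :
    ¬ ∃ A : Fin n → Finset (Fin n),
      (∀ i j : Fin n, i ≠ j → Disjoint (A i) (A j)) ∧
      (∀ i : Fin n, ∀ x ∈ A i, ∀ y ∈ A i, ¬ x ≠ y) ∧
      (∀ o : Fin n, (∀ i : Fin n, o ∉ A i) → ∀ i : Fin n, ∃ x ∈ A i, o ≠ x) ∧
      (∀ i j : Fin n, ∃ S : Finset (Fin n), S ⊆ A i ∪ A j ∧ S.card ≤ 1 ∧
        (∑ o ∈ A i \ S, (if o.val + 1 = n then (-1 : ℝ) else 1)) ≥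
          (∑ o ∈ A j \ S, (if o.val + 1 = n then (-1 : ℝ) else 1))) := by
  rintro ⟨A, hdisj, hind, hmax, hef⟩
  have hcover : ∀ o, ∃ i, o ∈ A i := by
    by_contra! ⟨o, ho⟩
    obtain ⟨i, hi⟩ := exists_mem_of_pairwiseDisjoint_of_nonempty le_rfl
      (fun i j hij => hdisj i j hij) (fun i => (hmax o ho i).imp fun _ hx => hx.1) o
    exact ho i hi
  choose f hf using hcover
  have hsingleton : ∀ o, A (f o) = {o} := fun o =>
    eq_singleton_iff_unique_mem.mpr ⟨hf o, fun x hx => not_not.mp (hind (f o) x hx o (hf o))⟩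
  let chore : Fin n := ⟨n - 1, by omega⟩
  let good : Fin n := ⟨0, by omega⟩
  obtain ⟨S, -, hS, henvy⟩ := hef (f chore) (f good)
  rw [hsingleton, hsingleton] at henvy
  refine henvy.not_gt (sum_singleton_sdiff_lt ?_ ?_ ?_ hS)
  · rw [if_pos (by simp only [chore]; omega)]; norm_num
  · rw [if_neg (by simp only [good]; omega)]; norm_num
  · simp only [chore, good, ne_eq, Fin.mk.injEq]; omega
end

section
/- For every finite tree T = (V, E) and every positive integer n, there exists a maximal equitable n-coloring of T, i.e., pairwise disjoint subsets S_1,...,S_n of V such that each S_i is an independent set of T, every vertex v ∈ V \ (S_1 ∪ ... ∪ S_n) has a neighbor in S_i for every i ∈ {1,...,n}, and max_{i∈{1,...,n}} |S_i| − min_{i∈{1,...,n}} |S_i| ≤ 1. -/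
/-!
Induct on the set `A` of vertices to be coloured. An isolated vertex of `A` joins a smallest
class. Otherwise root the tree and let `u` be the parent of a deepest vertex of `A`: every
neighbour of `u` in `A`, except possibly the parent `w` of `u`, is a deepest vertex and hence a
leaf of `A`. Colour `A` without `u` and these leaves by induction and put the leaves back, either
spread over all classes (leaving `u` uncoloured but adjacent to every class) or, when there are
fewer leaves than classes, together with `u` in distinct smallest classes, `u` avoiding `w`.
-/

open Finset Function

section Equitable

variable {ι : Type*} [DecidableEq ι]

lemma Set.EquitableOn.add_indicator_of_le {s : ι → ℕ} (hs : (Set.univ : Set ι).EquitableOn s)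
    {D : Finset ι} (hD : ∀ i ∈ D, ∀ j ∉ D, s i ≤ s j) :
    (Set.univ : Set ι).EquitableOn fun i => s i + if i ∈ D then 1 else 0 := by
  intro i j _ _
  have := hs (Set.mem_univ i) (Set.mem_univ j)
  dsimp only
  split_ifs with hi hj hj <;> grind

variable [Fintype ι]

lemma exists_finset_card_eq_forall_le (s : ι → ℕ) {k : ℕ} (hk : k ≤ Fintype.card ι) :
    ∃ D : Finset ι, #D = k ∧ ∀ i ∈ D, ∀ j ∉ D, s i ≤ s j := by
  induction k with
  | zero => exact ⟨∅, rfl, by simp⟩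
  | succ k ih =>
    obtain ⟨D, hDk, hD⟩ := ih (by omega)
    obtain ⟨m, hm, hmin⟩ := Dᶜ.exists_min_image s (card_pos.mp (by rw [card_compl]; omega))
    refine ⟨insert m D, by rw [card_insert_of_notMem (mem_compl.mp hm), hDk], ?_⟩
    intro i hi j hj
    rw [mem_insert, not_or] at *
    rcases hi with rfl | hi
    · exact hmin j (mem_compl.mpr hj.2)
    · exact hD i hi j hj.2

lemma Set.EquitableOn.exists_card_eq_add_indicator {s : ι → ℕ}
    (hs : (Set.univ : Set ι).EquitableOn s) {k : ℕ} (hk : k ≤ Fintype.card ι) :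
    ∃ D : Finset ι, #D = k ∧
      (Set.univ : Set ι).EquitableOn fun i => s i + if i ∈ D then 1 else 0 :=
  (exists_finset_card_eq_forall_le s hk).imp fun _ ⟨hDk, hD⟩ => ⟨hDk, hs.add_indicator_of_le hD⟩

-- Every class receives `d / card ι` elements, and the `d % card ι` smallest ones one more.
lemma Set.EquitableOn.exists_add_pos_sum_eq [Nonempty ι] {s : ι → ℕ}
    (hs : (Set.univ : Set ι).EquitableOn s) {d : ℕ} (hd : Fintype.card ι ≤ d) :
    ∃ c : ι → ℕ, (∀ i, 0 < c i) ∧ ∑ i, c i = d ∧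
      (Set.univ : Set ι).EquitableOn fun i => s i + c i := by
  set q := d / Fintype.card ι
  have hq : 0 < q := Nat.div_pos hd Fintype.card_pos
  have hsq : (Set.univ : Set ι).EquitableOn fun i => s i + q := fun i j hi hj => by
    have := hs hi hj; dsimp only; omega
  obtain ⟨D, hDk, hD⟩ := hsq.exists_card_eq_add_indicator (Nat.mod_lt d Fintype.card_pos).le
  refine ⟨fun i => q + if i ∈ D then 1 else 0, fun i => Nat.add_pos_left hq _, ?_, ?_⟩
  · simp [sum_add_distrib, hDk, q, Nat.div_add_mod]
  · simpa only [add_assoc] using hD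

end Equitable

lemma Finset.exists_partition_card_eq {α ι : Type*} [Fintype ι] (L : Finset α) (c : ι → ℕ)
    (h : ∑ i, c i = #L) :
    ∃ P : ι → Finset α, (∀ i, P i ⊆ L) ∧ (∀ i, #(P i) = c i) ∧ Pairwise (Disjoint on P) ∧
      ∀ x ∈ L, ∃ i, x ∈ P i := by
  let e : (Σ i, Fin (c i)) ≃ L := Fintype.equivOfCardEq (by simp [h])
  have he : ∀ {i j k l}, (e ⟨i, k⟩ : α) = e ⟨j, l⟩ → i = j := fun h =>
    congrArg Sigma.fst (e.injective (Subtype.ext h))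
  refine ⟨fun i => univ.map ⟨fun k => e ⟨i, k⟩, fun k l hkl => ?_⟩, fun i x hx => ?_,
    fun i => by simp, fun i j hij => ?_, fun x hx => ⟨(e.symm ⟨x, hx⟩).1, ?_⟩⟩
  · simpa using e.injective (Subtype.ext hkl)
  · obtain ⟨k, -, rfl⟩ := mem_map.mp hx
    exact (e _).2
  · refine disjoint_left.mpr fun x hi hj => hij ?_
    obtain ⟨k, -, rfl⟩ := mem_map.mp hi
    obtain ⟨l, -, hl⟩ := mem_map.mp hj
    exact he hl.symm
  · exact mem_map.mpr
      ⟨(e.symm ⟨x, hx⟩).2, mem_univ _, congrArg Subtype.val (e.apply_symm_apply _)⟩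

namespace SimpleGraph

variable {V ι : Type*} {G : SimpleGraph V}

lemma IsTree.eq_of_adj_of_dist_add_one_eq (hG : G.IsTree) (r : V) {x y z : V} (hy : G.Adj x y)
    (hz : G.Adj x z) (hdy : G.dist r y + 1 = G.dist r x) (hdz : G.dist r z + 1 = G.dist r x) :
    y = z := by
  classical
  obtain ⟨p, hp, -⟩ := (hG.connected r x).exists_path_of_dist
  suffices key : ∀ y, G.Adj x y → G.dist r y + 1 = G.dist r x → y = p.penultimate from
    (key y hy hdy).trans (key z hz hdz).symm
  intro y hy hdy
  obtain ⟨q, hq, hqy⟩ := (hG.connected r y).exists_path_of_dist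
  have hxq : x ∉ q.support := fun hx => by
    have := (dist_le (q.takeUntil x hx)).trans (q.length_takeUntil_le_length hx)
    omega
  exact hG.isAcyclic.eq_penultimate_of_adj_end hp hy
    (hG.isAcyclic.mem_support_of_ne_mem_support_of_adj_of_isPath hp hq hy hxq)

structure IsMaximalColoring (G : SimpleGraph V) (A : Finset V) (S : ι → Finset V) : Prop where
  subset : ∀ i, S i ⊆ A
  pairwise_disjoint : Pairwise (Disjoint on S)
  not_adj : ∀ i, ∀ x ∈ S i, ∀ y ∈ S i, ¬ G.Adj x y
  exists_adj : ∀ v ∈ A, (∀ i, v ∉ S i) → ∀ i, ∃ x ∈ S i, G.Adj v x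

namespace IsMaximalColoring

variable {A B : Finset V} {S R : ι → Finset V}

lemma of_cover (hA : ∀ x ∈ A, ∀ y ∈ A, ¬ G.Adj x y) (hS : ∀ i, S i ⊆ A)
    (hS_disj : Pairwise (Disjoint on S)) (hS_cover : ∀ x ∈ A, ∃ i, x ∈ S i) :
    IsMaximalColoring G A S where
  subset := hS
  pairwise_disjoint := hS_disj
  not_adj i x hx y hy := hA x (hS i hx) y (hS i hy)
  exists_adj v hv hvS := absurd (hS_cover v hv) (by simpa using hvS)

lemma singleton [DecidableEq ι] (x : V) (i₀ : ι) :
    IsMaximalColoring G {x} fun i => if i = i₀ then {x} else ∅ :=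
  of_cover (by simp) (fun i => by split_ifs <;> simp)
    (fun i j hij => by dsimp only [onFun]; split_ifs <;> simp_all)
    (fun y hy => ⟨i₀, by simpa using hy⟩)

variable [DecidableEq V]

lemma insert_of_exists_adj (hS : IsMaximalColoring G A S) {u : V}
    (hu : ∀ i, ∃ x ∈ S i, G.Adj u x) :
    IsMaximalColoring G (insert u A) S where
  subset i := (hS.subset i).trans (subset_insert u A)
  pairwise_disjoint := hS.pairwise_disjoint
  not_adj := hS.not_adj
  exists_adj v hv hvS := by
    rcases mem_insert.mp hv with rfl | hv
    · exact hu
    · exact hS.exists_adj v hv hvS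

lemma union (hS : IsMaximalColoring G A S) (hR : IsMaximalColoring G B R) (hAB : Disjoint A B)
    (hSR : ∀ i, ∀ x ∈ S i, ∀ y ∈ R i, ¬ G.Adj x y) :
    IsMaximalColoring G (A ∪ B) fun i => S i ∪ R i where
  subset i := union_subset_union (hS.subset i) (hR.subset i)
  pairwise_disjoint i j hij := by
    rw [onFun, disjoint_union_left, disjoint_union_right, disjoint_union_right]
    exact ⟨⟨hS.pairwise_disjoint hij, hAB.mono (hS.subset i) (hR.subset j)⟩,
      hAB.symm.mono (hR.subset i) (hS.subset j), hR.pairwise_disjoint hij⟩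
  not_adj i x hx y hy := by
    rcases mem_union.mp hx with hx | hx <;> rcases mem_union.mp hy with hy | hy
    · exact hS.not_adj i x hx y hy
    · exact hSR i x hx y hy
    · exact fun h => hSR i y hy x hx h.symm
    · exact hR.not_adj i x hx y hy
  exists_adj v hv hvSR i := by
    simp only [mem_union, not_or] at hvSR
    rcases mem_union.mp hv with hv | hv
    · obtain ⟨x, hx, hvx⟩ := hS.exists_adj v hv (fun i => (hvSR i).1) i
      exact ⟨x, mem_union_left _ hx, hvx⟩
    · obtain ⟨x, hx, hvx⟩ := hR.exists_adj v hv (fun i => (hvSR i).2) i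
      exact ⟨x, mem_union_right _ hx, hvx⟩

lemma card_union (hS : IsMaximalColoring G A S) (hR : IsMaximalColoring G B R)
    (hAB : Disjoint A B) (i : ι) : #(S i ∪ R i) = #(S i) + #(R i) :=
  card_union_of_disjoint (hAB.mono (hS.subset i) (hR.subset i))

lemma exists_insert_of_forall_not_adj [Fintype ι] [Nonempty ι] [DecidableEq ι]
    (hS : IsMaximalColoring G A S)
    (hS_eq : (Set.univ : Set ι).EquitableOn fun i => #(S i)) {x : V} (hx : x ∉ A)
    (hxA : ∀ y ∈ A, ¬ G.Adj x y) :
    ∃ T : ι → Finset V, IsMaximalColoring G (insert x A) T ∧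
      (Set.univ : Set ι).EquitableOn fun i => #(T i) := by
  obtain ⟨i₀, -, hi₀⟩ := univ.exists_min_image (fun i => #(S i)) univ_nonempty
  have hR := singleton (G := G) x i₀
  have hdisj : Disjoint A {x} := disjoint_singleton_right.mpr hx
  have hSR : ∀ i, ∀ y ∈ S i, ∀ z ∈ (if i = i₀ then ({x} : Finset V) else ∅), ¬ G.Adj y z := by
    intro i y hy z hz
    split_ifs at hz
    · rw [mem_singleton.mp hz]
      exact fun h => hxA y (hS.subset i hy) h.symm
    · simp at hz
  refine ⟨_, union_singleton x A ▸ hS.union hR hdisj hSR, ?_⟩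
  convert hS_eq.add_indicator_of_le (D := {i₀})
    (fun i hi j _ => mem_singleton.mp hi ▸ hi₀ j (mem_univ j)) using 3 with i
  rw [hS.card_union hR hdisj]
  split_ifs <;> simp_all

end IsMaximalColoring

-- `w` is arbitrary when every neighbour of `u` in `A` lies in `L`.
structure IsPendantStar (G : SimpleGraph V) (A L : Finset V) (u w : V) : Prop where
  center_mem : u ∈ A
  subset : L ⊆ A
  nonempty : L.Nonempty
  adj : ∀ x ∈ L, G.Adj u x
  eq_center : ∀ x ∈ L, ∀ y ∈ A, G.Adj x y → y = u
  mem_or_eq : ∀ y ∈ A, G.Adj u y → y ∈ L ∨ y = w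

lemma IsTree.exists_isPendantStar (hG : G.IsTree) {A : Finset V} (hA : A.Nonempty)
    (hA_adj : ∀ x ∈ A, ∃ y ∈ A, G.Adj x y) : ∃ L u w, IsPendantStar G A L u w := by
  classical
  obtain ⟨r⟩ := hG.connected.nonempty
  obtain ⟨x, hxA, hx_max⟩ := A.exists_max_image (G.dist r) hA
  have h_down : ∀ {y z}, z ∈ A → G.Adj y z → G.dist r y = G.dist r x →
      G.dist r z + 1 = G.dist r y := fun hz hyz hy => by
    have := hx_max _ hz
    have := hG.dist_eq_dist_add_one_of_adj r hyz
    omega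
  obtain ⟨u, huA, hxu⟩ := hA_adj x hxA
  have hux := h_down huA hxu rfl
  set L := {y ∈ A | G.Adj u y ∧ G.dist r y = G.dist r u + 1}
  have h_up : ∀ y ∈ A, G.Adj u y → y ∉ L → G.dist r y + 1 = G.dist r u := fun y hy huy hyL => by
    have := hG.dist_eq_dist_add_one_of_adj r huy
    simp only [L, mem_filter, not_and] at hyL
    have := hyL hy huy
    omega
  obtain ⟨w, hw⟩ : ∃ w, ∀ y ∈ A, G.Adj u y → y ∈ L ∨ y = w := by
    by_cases h : ∃ w ∈ A, G.Adj u w ∧ w ∉ L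
    · obtain ⟨w, hwA, huw, hwL⟩ := h
      refine ⟨w, fun y hy huy => or_iff_not_imp_left.mpr fun hyL => ?_⟩
      exact hG.eq_of_adj_of_dist_add_one_eq r huy huw (h_up y hy huy hyL) (h_up w hwA huw hwL)
    · push Not at h
      exact ⟨u, fun y hy huy => .inl (h y hy huy)⟩
  refine ⟨L, u, w, huA, filter_subset _ _, ⟨x, mem_filter.mpr ⟨hxA, hxu.symm, hux.symm⟩⟩,
    fun y hy => (mem_filter.mp hy).2.1, fun y hy z hz hyz => ?_, hw⟩
  obtain ⟨-, huy, hyu⟩ := mem_filter.mp hy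
  exact hG.eq_of_adj_of_dist_add_one_eq r hyz huy.symm (h_down hz hyz (by omega)) (by omega)

namespace IsPendantStar

variable {A L : Finset V} {u w : V} (hL : IsPendantStar G A L u w)
include hL

lemma center_notMem : u ∉ L := fun hu => G.loopless.irrefl u (hL.adj u hu)

lemma not_adj_of_mem {x y : V} (hx : x ∈ L) (hy : y ∈ L) : ¬ G.Adj x y := fun hxy =>
  hL.center_notMem (hL.eq_center x hx y (hL.subset hy) hxy ▸ hy)

variable [DecidableEq V]

lemma not_adj_of_mem_sdiff {x y : V} (hx : x ∈ A \ insert u L) (hy : y ∈ L) : ¬ G.Adj x y :=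
  fun hxy => by
    have := hL.eq_center y hy x (mem_sdiff.mp hx).1 hxy.symm
    simp_all

lemma eq_of_mem_sdiff_of_adj {x : V} (hx : x ∈ A \ insert u L) (hxu : G.Adj x u) : x = w := by
  simp only [mem_sdiff, mem_insert, not_or] at hx
  exact (hL.mem_or_eq x hx.1 hxu.symm).resolve_left hx.2.2

lemma sdiff_union : A \ insert u L ∪ insert u L = A :=
  sdiff_union_of_subset (insert_subset hL.center_mem hL.subset)

lemma sdiff_ssubset : A \ insert u L ⊂ A :=
  Finset.sdiff_ssubset (insert_subset hL.center_mem hL.subset) (insert_nonempty u L)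

variable [Fintype ι] [DecidableEq ι] {S : ι → Finset V}
  (hS : IsMaximalColoring G (A \ insert u L) S)
  (hS_eq : (Set.univ : Set ι).EquitableOn fun i => #(S i))
include hS hS_eq

-- With at least one leaf per class, `u` stays uncoloured and sees every class.
lemma exists_extend_of_card_le [Nonempty ι] (hcard : Fintype.card ι ≤ #L) :
    ∃ T : ι → Finset V, IsMaximalColoring G A T ∧
      (Set.univ : Set ι).EquitableOn fun i => #(T i) := by
  obtain ⟨c, hc_pos, hc_sum, hc_eq⟩ := hS_eq.exists_add_pos_sum_eq hcard
  obtain ⟨P, hPL, hPc, hP_disj, hP_cover⟩ := L.exists_partition_card_eq c hc_sum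
  have hR : IsMaximalColoring G (insert u L) P :=
    (IsMaximalColoring.of_cover (fun _ hx _ hy => hL.not_adj_of_mem hx hy) hPL hP_disj
      hP_cover).insert_of_exists_adj fun i => (card_pos.mp (hPc i ▸ hc_pos i)).imp fun x hx =>
        ⟨hx, hL.adj x (hPL i hx)⟩
  have hdisj : Disjoint (A \ insert u L) (insert u L) := sdiff_disjoint
  have hSP : ∀ i, ∀ x ∈ S i, ∀ y ∈ P i, ¬ G.Adj x y := fun i x hx y hy =>
    hL.not_adj_of_mem_sdiff (hS.subset i hx) (hPL i hy)
  refine ⟨_, hL.sdiff_union ▸ hS.union hR hdisj hSP, ?_⟩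
  simpa only [hS.card_union hR hdisj, hPc] using hc_eq

-- Otherwise `u` joins one of the `#L + 1` smallest classes that avoids `w`,
-- and the leaves go one each to the others.
lemma exists_extend_of_card_lt (hcard : #L < Fintype.card ι) :
    ∃ T : ι → Finset V, IsMaximalColoring G A T ∧
      (Set.univ : Set ι).EquitableOn fun i => #(T i) := by
  obtain ⟨D, hD_card, hD_eq⟩ := hS_eq.exists_card_eq_add_indicator (k := #L + 1) hcard
  obtain ⟨i₀, hi₀D, hw⟩ : ∃ i₀ ∈ D, w ∉ S i₀ := by
    obtain ⟨i, hi, j, hj, hij⟩ :=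
      one_lt_card.mp (hD_card ▸ Nat.lt_add_of_pos_left hL.nonempty.card_pos)
    by_contra! h
    exact Finset.disjoint_left.mp (hS.pairwise_disjoint hij) (h i hi) (h j hj)
  obtain ⟨P, hPL, hPc, hP_disj, hP_cover⟩ :=
    L.exists_partition_card_eq (fun i => if i ∈ D.erase i₀ then 1 else 0) (by
      rw [sum_boole, filter_mem_eq_inter, univ_inter, card_erase_of_mem hi₀D, hD_card]; rfl)
  have hPi₀ : P i₀ = ∅ := card_eq_zero.mp (by simp [hPc])
  set R : ι → Finset V := fun i => (if i = i₀ then {u} else ∅) ∪ P i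
  have huL : Disjoint {u} L := disjoint_singleton_left.mpr hL.center_notMem
  have hR : IsMaximalColoring G (insert u L) R := by
    refine insert_eq u L ▸ (IsMaximalColoring.singleton u i₀).union
      (.of_cover (fun _ hx _ hy => hL.not_adj_of_mem hx hy) hPL hP_disj hP_cover) huL ?_
    intro i x hx y hy
    split_ifs at hx with hi
    · simp [hi, hPi₀] at hy
    · simp at hx
  have hdisj : Disjoint (A \ insert u L) (insert u L) := sdiff_disjoint
  have hSR : ∀ i, ∀ x ∈ S i, ∀ y ∈ R i, ¬ G.Adj x y := by
    intro i x hx y hy hxy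
    rcases mem_union.mp hy with hy | hy
    · obtain ⟨rfl, rfl⟩ : i = i₀ ∧ y = u := by split_ifs at hy <;> simp_all
      exact hw (hL.eq_of_mem_sdiff_of_adj (hS.subset i hx) hxy ▸ hx)
    · exact hL.not_adj_of_mem_sdiff (hS.subset i hx) (hPL i hy) hxy
  refine ⟨_, hL.sdiff_union ▸ hS.union hR hdisj hSR, ?_⟩
  convert hD_eq using 3 with i
  rw [hS.card_union hR hdisj, card_union_of_disjoint, hPc]
  · by_cases hi : i = i₀ <;> simp [hi, hi₀D]
  · exact huL.mono (by split_ifs <;> simp) (hPL i)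

end IsPendantStar

variable [DecidableEq V]

theorem IsTree.exists_isMaximalColoring_equitableOn [Fintype ι] [Nonempty ι] [DecidableEq ι]
    (hG : G.IsTree) (A : Finset V) :
    ∃ S : ι → Finset V, IsMaximalColoring G A S ∧
      (Set.univ : Set ι).EquitableOn fun i => #(S i) := by
  induction A using Finset.strongInduction with
  | H A ih =>
  rcases A.eq_empty_or_nonempty with rfl | hA
  · exact ⟨fun _ => ∅, .of_cover (by simp) (fun _ => subset_rfl) (by simp [Pairwise])
      (by simp), by simp [Set.EquitableOn]⟩
  by_cases h_iso : ∃ x ∈ A, ∀ y ∈ A, ¬ G.Adj x y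
  · obtain ⟨x, hx, hxA⟩ := h_iso
    obtain ⟨S, hS, hS_eq⟩ := ih _ (erase_ssubset hx)
    simpa only [insert_erase hx] using hS.exists_insert_of_forall_not_adj hS_eq
      (notMem_erase x A) fun y hy => hxA y (mem_of_mem_erase hy)
  push Not at h_iso
  obtain ⟨L, u, w, hL⟩ := hG.exists_isPendantStar hA h_iso
  obtain ⟨S, hS, hS_eq⟩ := ih _ hL.sdiff_ssubset
  rcases le_or_gt (Fintype.card ι) #L with hcard | hcard
  · exact hL.exists_extend_of_card_le hS hS_eq hcard
  · exact hL.exists_extend_of_card_lt hS hS_eq hcard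

end SimpleGraph

/-- every finite tree admits a maximal equitable n-coloring for every n ≥ 1. -/
theorem stmt_18 {V : Type*} [Fintype V] [DecidableEq V] (G : SimpleGraph V)
    (hT : G.IsTree) (n : ℕ) (hn : 0 < n) :
    ∃ S : Fin n → Finset V,
      (∀ i j : Fin n, i ≠ j → Disjoint (S i) (S j)) ∧
      (∀ i : Fin n, ∀ x ∈ S i, ∀ y ∈ S i, ¬ G.Adj x y) ∧
      (∀ v : V, (∀ i : Fin n, v ∉ S i) → ∀ i : Fin n, ∃ x ∈ S i, G.Adj v x) ∧
      (∀ i j : Fin n, (S i).card ≤ (S j).card + 1) := by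
  have : Nonempty (Fin n) := ⟨⟨0, hn⟩⟩
  obtain ⟨S, hS, hS_eq⟩ := hT.exists_isMaximalColoring_equitableOn (ι := Fin n) univ
  exact ⟨S, fun i j hij => hS.pairwise_disjoint hij, hS.not_adj,
    fun v hv => hS.exists_adj v (mem_univ v) hv,
    fun i j => hS_eq (Set.mem_univ i) (Set.mem_univ j)⟩
end
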